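/- arXiv:1707.00463 — 2 statements merged into one kernel-verified Lean document; each statement's English description precedes it below -/
import Mathlib

section
/- Let φ : ℝ → ℝ be three times continuously differentiable with |φ'''(t)| ≤ M for all t, let a ∈ ℝ, ε > 0, J ∈ ℕ, and let x : Fin J → ℝ satisfy |x j - a| ≤ ε for all j; write d j = x j - a, S2 = Σ_j (d j)², S3 = Σ_j (d j)³, S4 = Σ_j (d j)⁴, Δ = S2·S4 - S3², b1 = Σ_j (d j)·(φ(x j) - φ(a)), b2 = Σ_j (d j)²·(φ(x j) - φ(a)). Assume Δ ≥ c·ε⁶ for some c > 0, and define the least-squares derivative estimate a1 = (S4·b1 - S3·b2)/Δ. Then |a1 - φ'(a)| ≤ (J²·M/(3c))·ε². -/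
/-!
Write `φ (x j) - φ a = φ'(a) d j + φ''(a)/2 · (d j)² + R j` with the Lagrange remainder
`|R j| ≤ M/6 · ε³`. The least-squares operator reproduces quadratics exactly, so the error
`a1 - φ'(a)` is `(S4 · Σ d R - S3 · Σ d² R) / Δ`; its numerator is `O(J² M ε⁸)` and `Δ ≥ c ε⁶`.
-/

open Finset

theorem abs_sub_taylor_two_le {f : ℝ → ℝ} {M : ℝ} (hf : ContDiff ℝ 3 f)
    (hM : ∀ t, |iteratedDeriv 3 f t| ≤ M) (a y : ℝ) :
    |f y - f a - deriv f a * (y - a) - iteratedDeriv 2 f a / 2 * (y - a) ^ 2|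
      ≤ M / 6 * |y - a| ^ 3 := by
  rcases eq_or_ne a y with rfl | hay
  · simp
  obtain ⟨ξ, -, hξ⟩ := taylor_mean_remainder_lagrange_iteratedDeriv (n := 2) hay hf.contDiffOn
  have hwithin : ∀ k ≤ 2, iteratedDerivWithin k f (Set.uIcc a y) a = iteratedDeriv k f a :=
    fun k hk ↦ iteratedDerivWithin_eq_iteratedDeriv (uniqueDiffOn_uIcc hay)
      (hf.contDiffAt.of_le (by exact_mod_cast hk.trans (by norm_num))) Set.left_mem_uIcc
  rw [taylor_within_apply, sum_range_succ, sum_range_succ, sum_range_one,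
    hwithin 0 (by norm_num), hwithin 1 (by norm_num), hwithin 2 (by norm_num)] at hξ
  have hrem : f y - f a - deriv f a * (y - a) - iteratedDeriv 2 f a / 2 * (y - a) ^ 2
      = iteratedDeriv 3 f ξ * (y - a) ^ 3 / 6 := by
    simp only [iteratedDeriv_zero, iteratedDeriv_one, Nat.factorial, smul_eq_mul] at hξ
    push_cast at hξ
    linarith
  rw [hrem, abs_div, abs_mul, abs_pow, abs_of_pos (by norm_num : (0 : ℝ) < 6)]
  have := mul_le_mul_of_nonneg_right (hM ξ) (pow_nonneg (abs_nonneg (y - a)) 3)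
  linarith

theorem abs_sum_pow_mul_le {ι : Type*} (s : Finset ι) {d g : ι → ℝ} {ε B : ℝ}
    (hd : ∀ i ∈ s, |d i| ≤ ε) (hg : ∀ i ∈ s, |g i| ≤ B) (k : ℕ) :
    |∑ i ∈ s, d i ^ k * g i| ≤ #s * (ε ^ k * B) := by
  rw [← nsmul_eq_mul]
  refine (abs_sum_le_sum_abs _ _).trans (sum_le_card_nsmul _ _ _ fun i hi ↦ ?_)
  have hdk : |d i| ^ k ≤ ε ^ k := pow_le_pow_left₀ (abs_nonneg _) (hd i hi) k
  rw [abs_mul, abs_pow]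
  exact mul_le_mul hdk (hg i hi) (abs_nonneg _) ((pow_nonneg (abs_nonneg _) k).trans hdk)

theorem abs_sum_pow_le {ι : Type*} (s : Finset ι) {d : ι → ℝ} {ε : ℝ}
    (hd : ∀ i ∈ s, |d i| ≤ ε) (k : ℕ) : |∑ i ∈ s, d i ^ k| ≤ #s * ε ^ k := by
  simpa using abs_sum_pow_mul_le s hd (g := 1) (B := 1) (by simp) k

-- The `C`-terms cancel: the least-squares operator is exact on quadratics.
theorem leastSquares_numerator_eq {ι : Type*} (s : Finset ι) (d r R : ι → ℝ) (D C : ℝ)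
    (hr : ∀ i, r i = D * d i + C * d i ^ 2 + R i) :
    (∑ i ∈ s, d i ^ 4) * (∑ i ∈ s, d i * r i) - (∑ i ∈ s, d i ^ 3) * (∑ i ∈ s, d i ^ 2 * r i)
      = D * ((∑ i ∈ s, d i ^ 2) * (∑ i ∈ s, d i ^ 4) - (∑ i ∈ s, d i ^ 3) ^ 2)
        + ((∑ i ∈ s, d i ^ 4) * (∑ i ∈ s, d i * R i)
          - (∑ i ∈ s, d i ^ 3) * (∑ i ∈ s, d i ^ 2 * R i)) := by
  have h1 : ∑ i ∈ s, d i * r i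
      = D * ∑ i ∈ s, d i ^ 2 + C * ∑ i ∈ s, d i ^ 3 + ∑ i ∈ s, d i * R i := by
    simp only [hr, mul_sum, ← sum_add_distrib]
    exact sum_congr rfl fun i _ ↦ by ring
  have h2 : ∑ i ∈ s, d i ^ 2 * r i
      = D * ∑ i ∈ s, d i ^ 3 + C * ∑ i ∈ s, d i ^ 4 + ∑ i ∈ s, d i ^ 2 * R i := by
    simp only [hr, mul_sum, ← sum_add_distrib]
    exact sum_congr rfl fun i _ ↦ by ring
  rw [h1, h2]
  ring

theorem abs_leastSquares_residual_le {ι : Type*} (s : Finset ι) {d R : ι → ℝ} {ε B : ℝ}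
    (hd : ∀ i ∈ s, |d i| ≤ ε) (hR : ∀ i ∈ s, |R i| ≤ B) :
    |(∑ i ∈ s, d i ^ 4) * (∑ i ∈ s, d i * R i) - (∑ i ∈ s, d i ^ 3) * (∑ i ∈ s, d i ^ 2 * R i)|
      ≤ 2 * #s ^ 2 * ε ^ 5 * B := by
  have hS4 := abs_sum_pow_le s hd 4
  have hS3 := abs_sum_pow_le s hd 3
  calc _ ≤ |∑ i ∈ s, d i ^ 4| * |∑ i ∈ s, d i ^ 1 * R i|
        + |∑ i ∈ s, d i ^ 3| * |∑ i ∈ s, d i ^ 2 * R i| := by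
        simp only [pow_one, ← abs_mul]; exact abs_sub _ _
    _ ≤ (#s * ε ^ 4) * (#s * (ε ^ 1 * B)) + (#s * ε ^ 3) * (#s * (ε ^ 2 * B)) :=
        add_le_add
          (mul_le_mul hS4 (abs_sum_pow_mul_le s hd hR 1) (abs_nonneg _) ((abs_nonneg _).trans hS4))
          (mul_le_mul hS3 (abs_sum_pow_mul_le s hd hR 2) (abs_nonneg _) ((abs_nonneg _).trans hS3))
    _ = 2 * #s ^ 2 * ε ^ 5 * B := by ring

/-- The least-squares difference operator for the first derivative on irregular
nodes is second-order accurate (first component of Eq. (11) of the paper). -/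
theorem irregular_first_derivative_error_bound
    (φ : ℝ → ℝ) (M a ε : ℝ) (J : ℕ) (x : Fin J → ℝ)
    (hφ : ContDiff ℝ 3 φ)
    (hM : ∀ t : ℝ, |iteratedDeriv 3 φ t| ≤ M)
    (hε : 0 < ε) (hx : ∀ j, |x j - a| ≤ ε) (c : ℝ) (hc : 0 < c)
    (hΔ : c * ε ^ 6 ≤
      (∑ j, (x j - a) ^ 2) * (∑ j, (x j - a) ^ 4) - (∑ j, (x j - a) ^ 3) ^ 2) :
    |((∑ j, (x j - a) ^ 4) * (∑ j, (x j - a) * (φ (x j) - φ a)) -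
        (∑ j, (x j - a) ^ 3) * (∑ j, (x j - a) ^ 2 * (φ (x j) - φ a))) /
        ((∑ j, (x j - a) ^ 2) * (∑ j, (x j - a) ^ 4) - (∑ j, (x j - a) ^ 3) ^ 2) -
      deriv φ a|
      ≤ (J ^ 2 * M / (3 * c)) * ε ^ 2 := by
  have hM0 : 0 ≤ M := (abs_nonneg _).trans (hM a)
  set R : Fin J → ℝ := fun j ↦
    φ (x j) - φ a - deriv φ a * (x j - a) - iteratedDeriv 2 φ a / 2 * (x j - a) ^ 2
  have hR : ∀ j ∈ univ, |R j| ≤ M / 6 * ε ^ 3 := fun j _ ↦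
    (abs_sub_taylor_two_le hφ hM a (x j)).trans
      (by gcongr; exact hx j)
  have hΔpos : 0 < (∑ j, (x j - a) ^ 2) * (∑ j, (x j - a) ^ 4) - (∑ j, (x j - a) ^ 3) ^ 2 :=
    (by positivity : 0 < c * ε ^ 6).trans_le hΔ
  rw [leastSquares_numerator_eq univ (fun j ↦ x j - a) _ R (deriv φ a) (iteratedDeriv 2 φ a / 2)
    (fun j ↦ by ring), add_div, mul_div_cancel_right₀ _ hΔpos.ne', add_sub_cancel_left,
    abs_div, abs_of_pos hΔpos]
  have hE := abs_leastSquares_residual_le univ (fun j _ ↦ hx j) hR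
  rw [card_univ, Fintype.card_fin] at hE
  calc _ ≤ 2 * (J : ℝ) ^ 2 * ε ^ 5 * (M / 6 * ε ^ 3) / (c * ε ^ 6) :=
        div_le_div₀ (by positivity) hE (by positivity) hΔ
    _ = (J ^ 2 * M / (3 * c)) * ε ^ 2 := by field_simp; ring
end

section
/- Let φ : ℝ → ℝ be three times continuously differentiable with |φ'''(t)| ≤ M for all t, let a ∈ ℝ, ε > 0, J ∈ ℕ, and let x : Fin J → ℝ satisfy |x j - a| ≤ ε for all j; write d j = x j - a, S2 = Σ_j (d j)², S3 = Σ_j (d j)³, S4 = Σ_j (d j)⁴, Δ = S2·S4 - S3², b1 = Σ_j (d j)·(φ(x j) - φ(a)), b2 = Σ_j (d j)²·(φ(x j) - φ(a)). Assume Δ ≥ c·ε⁶ for some c > 0, and define the least-squares second-derivative estimate a2 = (S2·b2 - S3·b1)/Δ. Then |a2 - (1/2)·φ''(a)| ≤ (J²·M/(3c))·ε. -/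
/-!
The least-squares estimate is linear in the data and reproduces the quadratic part of the
Taylor expansion `φ (x j) - φ a = φ' a dⱼ + φ'' a / 2 dⱼ² + Rⱼ` exactly, so its error is the
estimate applied to the remainders, `|Rⱼ| ≤ M ε³ / 6`. With `|dⱼ| ≤ ε` the numerator
`S₂ ∑ dⱼ² Rⱼ - S₃ ∑ dⱼ Rⱼ` is at most `J² M ε⁷ / 3`, while the determinant is only bounded
below by `c ε⁶`. Only one power of `ε` survives because the nodes need not be symmetric
about `a`; for symmetric nodes the leading cubic part of the remainder would cancel.
-/

open Set Finset

theorem abs_sub_taylor_le_of_abs_iteratedDeriv_le {f : ℝ → ℝ} {n : ℕ} {x₀ x C : ℝ}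
    (hf : ContDiff ℝ (n + 1) f) (hC : ∀ t ∈ uIoo x₀ x, |iteratedDeriv (n + 1) f t| ≤ C) :
    |f x - ∑ k ∈ range (n + 1), ((k.factorial : ℝ)⁻¹ * (x - x₀) ^ k) * iteratedDeriv k f x₀|
      ≤ C * |x - x₀| ^ (n + 1) / (n + 1).factorial := by
  rcases eq_or_ne x₀ x with rfl | hne
  · simp [sum_range_succ']
  obtain ⟨t, ht, hrem⟩ := taylor_mean_remainder_lagrange_iteratedDeriv hne hf.contDiffOn
  have hpoly : taylorWithinEval f n (uIcc x₀ x) x₀ x =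
      ∑ k ∈ range (n + 1), ((k.factorial : ℝ)⁻¹ * (x - x₀) ^ k) * iteratedDeriv k f x₀ := by
    rw [taylor_within_apply]
    refine sum_congr rfl fun k hk => ?_
    rw [smul_eq_mul, iteratedDerivWithin_eq_iteratedDeriv (uniqueDiffOn_uIcc hne)
      (hf.of_le (by exact_mod_cast (mem_range.mp hk).le)).contDiffAt left_mem_uIcc]
  rw [← hpoly, hrem, abs_div, abs_mul, abs_pow,
    abs_of_pos (by positivity : (0 : ℝ) < (n + 1).factorial)]
  gcongr
  exact hC t ht

theorem abs_sub_quadratic_taylor_le {f : ℝ → ℝ} {x₀ x C : ℝ}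
    (hf : ContDiff ℝ 3 f) (hC : ∀ t ∈ uIoo x₀ x, |iteratedDeriv 3 f t| ≤ C) :
    |f x - f x₀ - deriv f x₀ * (x - x₀) - iteratedDeriv 2 f x₀ / 2 * (x - x₀) ^ 2|
      ≤ C * |x - x₀| ^ 3 / 6 := by
  have h := abs_sub_taylor_le_of_abs_iteratedDeriv_le (n := 2) hf hC
  norm_num [sum_range_succ, Nat.factorial] at h
  convert h using 2
  ring

section QuadraticFit

variable {ι : Type*} [Fintype ι]

noncomputable def quadFitDet (d : ι → ℝ) : ℝ :=
  (∑ j, d j ^ 2) * (∑ j, d j ^ 4) - (∑ j, d j ^ 3) ^ 2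

/-- Cramer's rule for the second unknown of the normal equations
`[[S₂, S₃], [S₃, S₄]] (a₁, a₂) = (∑ dⱼ fⱼ, ∑ dⱼ² fⱼ)` of the least-squares fit
`fⱼ ≈ a₁ dⱼ + a₂ dⱼ²`, where `Sₖ = ∑ dⱼᵏ`. -/
noncomputable def quadFitCoeff (d f : ι → ℝ) : ℝ :=
  ((∑ j, d j ^ 2) * (∑ j, d j ^ 2 * f j) - (∑ j, d j ^ 3) * (∑ j, d j * f j)) / quadFitDet d

theorem quadFitCoeff_add (d f g : ι → ℝ) :
    quadFitCoeff d (f + g) = quadFitCoeff d f + quadFitCoeff d g := by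
  simp only [quadFitCoeff, Pi.add_apply, mul_add, sum_add_distrib]
  ring

theorem quadFitCoeff_linear_add_quadratic (d : ι → ℝ) (p q : ℝ) (hd : quadFitDet d ≠ 0) :
    quadFitCoeff d (fun j => p * d j + q * d j ^ 2) = q := by
  have hS2 : ∑ j, d j ^ 2 * (p * d j + q * d j ^ 2) = p * ∑ j, d j ^ 3 + q * ∑ j, d j ^ 4 := by
    simp only [mul_sum, ← sum_add_distrib]; exact sum_congr rfl fun j _ => by ring
  have hS1 : ∑ j, d j * (p * d j + q * d j ^ 2) = p * ∑ j, d j ^ 2 + q * ∑ j, d j ^ 3 := by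
    simp only [mul_sum, ← sum_add_distrib]; exact sum_congr rfl fun j _ => by ring
  rw [quadFitCoeff, hS2, hS1, div_eq_iff hd, quadFitDet]
  ring

theorem abs_sum_pow_mul_le_s12 {d r : ι → ℝ} {ε K : ℝ} (hd : ∀ j, |d j| ≤ ε) (hr : ∀ j, |r j| ≤ K)
    (k : ℕ) : |∑ j, d j ^ k * r j| ≤ Fintype.card ι * (ε ^ k * K) := by
  calc |∑ j, d j ^ k * r j| ≤ ∑ j, |d j| ^ k * |r j| := by
        simpa only [abs_mul, abs_pow] using abs_sum_le_sum_abs (fun j => d j ^ k * r j) univ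
    _ ≤ ∑ _j : ι, ε ^ k * K := by
        gcongr with j
        · exact pow_nonneg ((abs_nonneg _).trans (hd j)) k
        · exact hd j
        · exact hr j
    _ = Fintype.card ι * (ε ^ k * K) := by simp

theorem abs_quadFitCoeff_le {d r : ι → ℝ} {ε K c : ℝ} (hd : ∀ j, |d j| ≤ ε)
    (hr : ∀ j, |r j| ≤ K) (hε : 0 < ε) (hc : 0 < c) (hdet : c * ε ^ 6 ≤ quadFitDet d) :
    |quadFitCoeff d r| ≤ 2 * Fintype.card ι ^ 2 * K / (c * ε ^ 2) := by
  have hone : ∀ j : ι, |(1 : ℝ)| ≤ 1 := fun _ => abs_one.le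
  have hS2 := abs_sum_pow_mul_le_s12 hd hone 2
  have hS3 := abs_sum_pow_mul_le_s12 hd hone 3
  have hE1 := abs_sum_pow_mul_le_s12 hd hr 1
  have hE2 := abs_sum_pow_mul_le_s12 hd hr 2
  simp only [mul_one, pow_one] at hS2 hS3 hE1
  have hnum : |(∑ j, d j ^ 2) * (∑ j, d j ^ 2 * r j) - (∑ j, d j ^ 3) * (∑ j, d j * r j)|
      ≤ 2 * Fintype.card ι ^ 2 * K * ε ^ 4 := by
    calc _ ≤ |(∑ j, d j ^ 2) * (∑ j, d j ^ 2 * r j)| + |(∑ j, d j ^ 3) * (∑ j, d j * r j)| :=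
          abs_sub _ _
      _ ≤ (Fintype.card ι * ε ^ 2) * (Fintype.card ι * (ε ^ 2 * K))
          + (Fintype.card ι * ε ^ 3) * (Fintype.card ι * (ε * K)) := by
          rw [abs_mul, abs_mul]
          gcongr
      _ = 2 * Fintype.card ι ^ 2 * K * ε ^ 4 := by ring
  rw [quadFitCoeff, abs_div, abs_of_pos ((by positivity : 0 < c * ε ^ 6).trans_le hdet)]
  calc _ ≤ 2 * Fintype.card ι ^ 2 * K * ε ^ 4 / (c * ε ^ 6) :=
        div_le_div₀ ((abs_nonneg _).trans hnum) hnum (by positivity) hdet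
    _ = 2 * Fintype.card ι ^ 2 * K / (c * ε ^ 2) := by field_simp

end QuadraticFit

/-- The least-squares difference operator for the second derivative on irregular
nodes is only first-order accurate (second component of Eq. (11) of the paper). -/
theorem irregular_second_derivative_error_bound
    (φ : ℝ → ℝ) (M a ε : ℝ) (J : ℕ) (x : Fin J → ℝ)
    (hφ : ContDiff ℝ 3 φ)
    (hM : ∀ t : ℝ, |iteratedDeriv 3 φ t| ≤ M)
    (hε : 0 < ε) (hx : ∀ j, |x j - a| ≤ ε) (c : ℝ) (hc : 0 < c)
    (hΔ : c * ε ^ 6 ≤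
      (∑ j, (x j - a) ^ 2) * (∑ j, (x j - a) ^ 4) - (∑ j, (x j - a) ^ 3) ^ 2) :
    |((∑ j, (x j - a) ^ 2) * (∑ j, (x j - a) ^ 2 * (φ (x j) - φ a)) -
        (∑ j, (x j - a) ^ 3) * (∑ j, (x j - a) * (φ (x j) - φ a))) /
        ((∑ j, (x j - a) ^ 2) * (∑ j, (x j - a) ^ 4) - (∑ j, (x j - a) ^ 3) ^ 2) -
      (1 / 2) * iteratedDeriv 2 φ a|
      ≤ (J ^ 2 * M / (3 * c)) * ε := by
  set d : Fin J → ℝ := fun j => x j - a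
  set R : Fin J → ℝ := fun j =>
    φ (x j) - φ a - deriv φ a * d j - iteratedDeriv 2 φ a / 2 * d j ^ 2
  have hdet : quadFitDet d ≠ 0 := ((by positivity : 0 < c * ε ^ 6).trans_le hΔ).ne'
  have hsplit : (fun j => φ (x j) - φ a) =
      (fun j => deriv φ a * d j + iteratedDeriv 2 φ a / 2 * d j ^ 2) + R := by
    ext j; simp only [Pi.add_apply, R]; ring
  have hM0 : 0 ≤ M := (abs_nonneg _).trans (hM a)
  have hR : ∀ j, |R j| ≤ M * ε ^ 3 / 6 := fun j =>
    (abs_sub_quadratic_taylor_le hφ fun t _ => hM t).trans (by gcongr; exact hx j)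
  change |quadFitCoeff d (fun j => φ (x j) - φ a) - 1 / 2 * iteratedDeriv 2 φ a| ≤ _
  rw [hsplit, quadFitCoeff_add, quadFitCoeff_linear_add_quadratic d _ _ hdet]
  calc _ = |quadFitCoeff d R| := by congr 1; ring
    _ ≤ 2 * Fintype.card (Fin J) ^ 2 * (M * ε ^ 3 / 6) / (c * ε ^ 2) :=
        abs_quadFitCoeff_le hx hR hε hc hΔ
    _ = J ^ 2 * M / (3 * c) * ε := by
        rw [Fintype.card_fin]; field_simp; ring
end
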